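/- Let X be a Segal simplicial space (i.e., the canonical maps Xₙ → X₁ ×_{X₀} ⋯ ×_{X₀} X₁ are equivalences, equivalently the counit ε : Dec_⊤(X) → X is a right fibration and ε : Dec_⊥(X) → X is a left fibration). Then any Dec_⊥-coalgebra structure γ : X → Dec_⊥(X) on X is rigid, i.e., γ is a cartesian simplicial map. -/

import Mathlib

open CategoryTheory Simplicial Opposite

/-- A `Dec_⊥`-coalgebra structure on a simplicial object `X` (simplicial map
`γ : X ⟶ Dec_⊥(X)` with counit and coassociativity laws). -/
structure DecBotCoalg {C : Type*} [Category C] (X : SimplicialObject C) where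
  γ : ∀ n : ℕ, X _⦋n⦌ ⟶ X _⦋n+1⦌
  nat_δ : ∀ (n : ℕ) (i : Fin (n + 2)), X.δ i ≫ γ n = γ (n+1) ≫ X.δ i.succ
  nat_σ : ∀ (n : ℕ) (i : Fin (n + 1)), X.σ i ≫ γ (n+1) = γ n ≫ X.σ i.succ
  counit : ∀ n : ℕ, γ n ≫ X.δ (0 : Fin (n + 2)) = 𝟙 _
  coassoc : ∀ n : ℕ, γ n ≫ γ (n+1) = γ n ≫ X.σ (0 : Fin (n + 2))

/-!
For Segal `X`, pasting the Segal squares shows that the counit `ε = δ 0 : Dec_⊥ X ⟶ X` is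
cartesian on every face of `Dec_⊥ X` except the bottom one, i.e. it is a left fibration. Since
`γ` is a section of `ε`, the face squares of `γ` at those `j` are pullbacks by cancellation.
The face square at `δ 0` is not reached this way, but coassociativity exhibits it as a retract
of the face square at `δ 1` one level up. Finally, each degeneracy square of `γ` is a pullback
because it cancels against the face square at `δ i` that splits it.
-/

namespace CategoryTheory.IsPullback

variable {C : Type*} [Category C]

theorem of_retract {P X Y Z P' X' Y' Z' : C}
    {fst : P ⟶ X} {snd : P ⟶ Y} {f : X ⟶ Z} {g : Y ⟶ Z}
    {fst' : P' ⟶ X'} {snd' : P' ⟶ Y'} {f' : X' ⟶ Z'} {g' : Y' ⟶ Z'}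
    (w : fst ≫ f = snd ≫ g) (h : IsPullback fst' snd' f' g')
    (rP : Retract P P') (rX : Retract X X') (rY : Retract Y Y') (iZ : Z ⟶ Z')
    (hfst : rP.i ≫ fst' = fst ≫ rX.i) (hsnd : rP.i ≫ snd' = snd ≫ rY.i)
    (hf : rX.i ≫ f' = f ≫ iZ) (hg : rY.i ≫ g' = g ≫ iZ)
    (hfst_r : rP.r ≫ fst = fst' ≫ rX.r) (hsnd_r : rP.r ≫ snd = snd' ≫ rY.r) :
    IsPullback fst snd f g := by
  refine .mk' w (fun T φ φ' h₁ h₂ => ?_) (fun T a b hab => ?_)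
  · have hi : φ ≫ rP.i = φ' ≫ rP.i := h.hom_ext
      (by simp only [Category.assoc, hfst, reassoc_of% h₁])
      (by simp only [Category.assoc, hsnd, reassoc_of% h₂])
    simpa using hi =≫ rP.r
  · have hab' : (a ≫ rX.i) ≫ f' = (b ≫ rY.i) ≫ g' := by
      simp only [Category.assoc, hf, hg, reassoc_of% hab]
    exact ⟨h.lift _ _ hab' ≫ rP.r,
      by simp [hfst_r], by simp [hsnd_r]⟩

end CategoryTheory.IsPullback

namespace CategoryTheory.SimplicialObject

variable {C : Type*} [Category C] (X : SimplicialObject C)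

theorem isPullback_δ_succ_δ_zero_of_segal
    (hSegal : ∀ n : ℕ, IsPullback (X.δ (0 : Fin (n + 3))) (X.δ (Fin.last (n + 2)))
      (X.δ (Fin.last (n + 1))) (X.δ (0 : Fin (n + 2))))
    (n : ℕ) (j : Fin (n + 2)) (hj : j ≠ 0) :
    IsPullback (X.δ j.succ) (X.δ 0) (X.δ 0) (X.δ j) := by
  have top : ∀ n, IsPullback (X.δ (Fin.last (n + 1)).succ) (X.δ 0) (X.δ 0)
      (X.δ (Fin.last (n + 1))) := fun n => by simpa using (hSegal n).flip
  induction n with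
  | zero =>
    fin_cases j
    exacts [absurd rfl hj, top 0]
  | succ n ih =>
    induction j using Fin.reverseInduction with
    | last => exact top (n + 1)
    | cast m ihm =>
      have hm : m ≠ 0 := Fin.castSucc_ne_zero_iff.mp hj
      refine .of_right ?_ (by simpa using X.δ_comp_δ (Fin.zero_le _)) (ih m hm)
      rw [Fin.succ_castSucc, X.δ_comp_δ_self, X.δ_comp_δ_self]
      exact (ihm (Fin.succ_ne_zero m)).paste_horiz (ih m hm)

end CategoryTheory.SimplicialObject

namespace DecBotCoalg

variable {C : Type*} [Category C] {X : SimplicialObject C} (γ : DecBotCoalg X)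

theorem isPullback_δ_of_isPullback_counit {n : ℕ} {j : Fin (n + 2)}
    (h : IsPullback (X.δ j.succ) (X.δ 0) (X.δ 0) (X.δ j)) :
    IsPullback (X.δ j) (γ.γ (n + 1)) (γ.γ n) (X.δ j.succ) :=
  .of_bot (by simpa only [γ.counit] using IsPullback.id_vert (X.δ j)) (γ.nat_δ n j) h

theorem isPullback_δ_zero_of_isPullback_δ_one {n : ℕ}
    (h : IsPullback (X.δ (1 : Fin (n + 3))) (γ.γ (n + 2)) (γ.γ (n + 1))
      (X.δ (1 : Fin (n + 3)).succ)) :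
    IsPullback (X.δ (0 : Fin (n + 2))) (γ.γ (n + 1)) (γ.γ n) (X.δ (0 : Fin (n + 2)).succ) :=
  -- `γ` (split by `δ 0`) on the left and `σ 0` (split by `δ 1`) on the right edge
  .of_retract (γ.nat_δ n 0) h
    ⟨γ.γ (n + 1), X.δ 0, γ.counit _⟩ ⟨γ.γ n, X.δ 0, γ.counit _⟩ ⟨X.σ 0, X.δ 1, X.δ_comp_σ_succ⟩
    (X.σ 0) (γ.nat_δ n 0).symm (γ.coassoc _) (γ.coassoc _)
    (X.δ_comp_σ_of_gt (i := 1) (j := 0) Fin.zero_lt_one) (X.δ_comp_δ_self (i := 0))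
    (γ.nat_δ (n + 1) 0)

theorem isPullback_σ_of_isPullback_δ {n : ℕ} {i : Fin (n + 1)}
    (h : IsPullback (X.δ i.castSucc) (γ.γ (n + 1)) (γ.γ n) (X.δ i.castSucc.succ)) :
    IsPullback (X.σ i) (γ.γ n) (γ.γ (n + 1)) (X.σ i.succ) := by
  refine .of_right ?_ (γ.nat_σ n i) h
  rw [X.δ_comp_σ_self, Fin.succ_castSucc, X.δ_comp_σ_self]
  exact .id_horiz _

end DecBotCoalg

theorem decBotCoalg_rigid_of_segal_general {C : Type*} [Category C]
    (X : SimplicialObject C)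
    (hSegal : ∀ n : ℕ, IsPullback (X.δ (0 : Fin (n + 3))) (X.δ (Fin.last (n + 2)))
      (X.δ (Fin.last (n + 1))) (X.δ (0 : Fin (n + 2))))
    (γ : DecBotCoalg X) :
    (∀ (n : ℕ) (i : Fin (n + 2)),
        IsPullback (X.δ i) (γ.γ (n+1)) (γ.γ n) (X.δ i.succ)) ∧
    (∀ (n : ℕ) (i : Fin (n + 1)),
        IsPullback (X.σ i) (γ.γ n) (γ.γ (n+1)) (X.σ i.succ)) := by
  have face_of_ne_zero : ∀ (n : ℕ) (j : Fin (n + 2)), j ≠ 0 →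
      IsPullback (X.δ j) (γ.γ (n + 1)) (γ.γ n) (X.δ j.succ) := fun n j hj =>
    γ.isPullback_δ_of_isPullback_counit (X.isPullback_δ_succ_δ_zero_of_segal hSegal n j hj)
  have face : ∀ (n : ℕ) (i : Fin (n + 2)),
      IsPullback (X.δ i) (γ.γ (n + 1)) (γ.γ n) (X.δ i.succ) := by
    intro n i
    obtain rfl | hi := eq_or_ne i 0
    · exact γ.isPullback_δ_zero_of_isPullback_δ_one (face_of_ne_zero (n + 1) 1 one_ne_zero)
    · exact face_of_ne_zero n i hi
  exact ⟨face, fun n i => γ.isPullback_σ_of_isPullback_δ (face n i.castSucc)⟩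

/-- If `X` is a Segal simplicial object (Segal condition expressed by the
pullback squares `X_{n+2} ≅ X_{n+1} ×_{X_n} X_{n+1}` along bottom and top faces, equivalently
the counit `ε : Dec_⊤(X) → X` is a right fibration), then every `Dec_⊥`-coalgebra structure
`γ` on `X` is rigid: `γ` is a cartesian simplicial map, i.e. all of its naturality squares
(at faces and at degeneracies) are pullbacks. -/
theorem decBotCoalg_rigid_of_segal {C : Type*} [Category C]
    [Limits.HasPullbacks C] (X : SimplicialObject C)
    (hSegal : ∀ n : ℕ, IsPullback (X.δ (0 : Fin (n + 3))) (X.δ (Fin.last (n + 2)))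
      (X.δ (Fin.last (n + 1))) (X.δ (0 : Fin (n + 2))))
    (γ : DecBotCoalg X) :
    (∀ (n : ℕ) (i : Fin (n + 2)),
        IsPullback (X.δ i) (γ.γ (n+1)) (γ.γ n) (X.δ i.succ)) ∧
    (∀ (n : ℕ) (i : Fin (n + 1)),
        IsPullback (X.σ i) (γ.γ n) (γ.γ (n+1)) (X.σ i.succ)) :=
  decBotCoalg_rigid_of_segal_general X hSegal γ
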